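/- With Γ₂ = 𝟙⊗𝟙 + √2 ∑_i ∂_i ⊗ T_i − √2 ∑_i x_i ⊗ T_{−i} on V = ℂ[x₁,…,xₙ]⊗ℂ^{2n+1} as defined above, and X_{δ_j} acting on V by the tensor product rule X_{δ_j}(x^k ⊗ v) = (1/√2)x^{k+δ_j} ⊗ v + (−1)^{|k|} x^k ⊗ T_j(v), the intertwining identity X_{δ_j}(Γ₂(x^k ⊗ v₀)) = Γ₂(−(1/√2) x^{k+δ_j} ⊗ v₀) holds for all multi-indices k and all 1 ≤ j ≤ n. -/

import Mathlib

open Finsupp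

noncomputable section

abbrev V (n : ℕ) : Type := ((Fin n →₀ ℕ) × Fin (2*n+1)) →₀ ℂ

def b {n : ℕ} (k : Fin n →₀ ℕ) (j : Fin (2*n+1)) : V n := Finsupp.single (k, j) 1

def mkOp {n : ℕ} (g : (Fin n →₀ ℕ) × Fin (2*n+1) → V n) : V n →ₗ[ℂ] V n :=
  Finsupp.lsum ℂ fun a => LinearMap.toSpanSingleton ℂ (V n) (g a)

def deg {n : ℕ} (k : Fin n →₀ ℕ) : ℕ := k.sum fun _ v => v

def sgn {n : ℕ} (k : Fin n →₀ ℕ) : ℂ := (-1) ^ deg k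

def rt2 : ℂ := Real.sqrt 2

def idx0 {n : ℕ} : Fin (2*n+1) := ⟨0, by omega⟩

def idxLo {n : ℕ} (i : Fin n) : Fin (2*n+1) := ⟨i.1+1, by have := i.isLt; omega⟩

def idxHi {n : ℕ} (i : Fin n) : Fin (2*n+1) := ⟨n+i.1+1, by have := i.isLt; omega⟩

/-- `T_i` applied to `x^k ⊗ v_j` (without the parity sign). -/
def TpApp {n : ℕ} (i : Fin n) (k : Fin n →₀ ℕ) (j : Fin (2*n+1)) : V n :=
  if j = idx0 then b k (idxLo i) else if j = idxHi i then b k idx0 else 0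

/-- `T_{-i}` applied to `x^k ⊗ v_j` (without the parity sign). -/
def TmApp {n : ℕ} (i : Fin n) (k : Fin n →₀ ℕ) (j : Fin (2*n+1)) : V n :=
  if j = idx0 then -(b k (idxHi i)) else if j = idxLo i then b k idx0 else 0

/-- The action of the odd root vector `X_{δ_j}` on `ℂ[x] ⊗ ℂ^{1|2n}`. -/
def Xplus {n : ℕ} (jj : Fin n) : V n →ₗ[ℂ] V n :=
  mkOp fun p => rt2⁻¹ • b (p.1 + Finsupp.single jj 1) p.2 + sgn p.1 • TpApp jj p.1 p.2

/-- The action of the odd root vector `X_{-δ_i}` on `ℂ[x] ⊗ ℂ^{1|2n}`. -/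
def Xminus {n : ℕ} (i : Fin n) : V n →ₗ[ℂ] V n :=
  mkOp fun p => (rt2⁻¹ * (p.1 i : ℂ)) • b (p.1 - Finsupp.single i 1) p.2
    + sgn p.1 • TmApp i p.1 p.2

/-- `Γ_{w₂} = 1⊗1 + √2 ∑ ∂_i ⊗ T_i - √2 ∑ x_i ⊗ T_{-i}`. -/
def Gamma2 {n : ℕ} : V n →ₗ[ℂ] V n :=
  mkOp fun p => b p.1 p.2
    + rt2 • ∑ i : Fin n, (sgn p.1 * (p.1 i : ℂ)) • TpApp i (p.1 - Finsupp.single i 1) p.2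
    - rt2 • ∑ i : Fin n, sgn p.1 • TmApp i (p.1 + Finsupp.single i 1) p.2

/-- `Γ_{w₁} = 1⊗1 - √2 ∑ ∂_i ⊗ T_i + √2 ∑ x_i ⊗ T_{-i}`. -/
def Gamma1 {n : ℕ} : V n →ₗ[ℂ] V n :=
  mkOp fun p => b p.1 p.2
    - rt2 • ∑ i : Fin n, (sgn p.1 * (p.1 i : ℂ)) • TpApp i (p.1 - Finsupp.single i 1) p.2
    + rt2 • ∑ i : Fin n, sgn p.1 • TmApp i (p.1 + Finsupp.single i 1) p.2

/-!
Write `Γ₂(xᵐ ⊗ v₀) = xᵐ ⊗ v₀ + √2 (-1)^|m| (∑ᵢ ∂ᵢxᵐ ⊗ vᵢ + ∑ᵢ xᵢxᵐ ⊗ v_{n+i})`. Applied to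
`Γ₂(xᵏ ⊗ v₀)`, `X_{δⱼ}` multiplies every term by `xⱼ/√2` and, through `Tⱼ`, adds two more:
`(-1)^|k| xᵏ ⊗ vⱼ` (from `v₀`) and `-√2 x^{k+δⱼ} ⊗ v₀` (from `v_{n+j}`). The first is the
`δᵢⱼ` term of the product rule `∂ᵢ(xⱼxᵏ) = δᵢⱼxᵏ + xⱼ∂ᵢxᵏ`, the second turns `1/√2` into
`-1/√2`, and `(-1)^|k+δⱼ| = -(-1)^|k|` absorbs the remaining factor `-1/√2 · √2 = -1`.
-/

lemma add_single_tsub_single_of_ne {ι : Type*} [DecidableEq ι] (m : ι →₀ ℕ) {i j : ι}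
    (h : i ≠ j) : m + single j 1 - single i 1 = m - single i 1 + single j 1 := by
  ext a
  simp only [Finsupp.tsub_apply, Finsupp.add_apply, Finsupp.single_apply]
  split_ifs <;> subst_vars <;> first | omega | exact absurd rfl h

/-- The product rule `∂ᵢ (xⱼ xᵐ) = δᵢⱼ xᵐ + xⱼ ∂ᵢ xᵐ` in the exponent notation. -/
lemma sum_add_single_smul_tsub_single {ι M : Type*} [Fintype ι] [DecidableEq ι]
    [AddCommMonoid M] (f : (ι →₀ ℕ) → ι → M) (m : ι →₀ ℕ) (j : ι) :
    ∑ i, (m + single j 1 : ι →₀ ℕ) i • f (m + single j 1 - single i 1) i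
      = f m j + ∑ i, m i • f (m - single i 1 + single j 1) i := by
  have summand : ∀ i, (m + single j 1 : ι →₀ ℕ) i • f (m + single j 1 - single i 1) i
      = (if i = j then f m j else 0) + m i • f (m - single i 1 + single j 1) i := by
    intro i
    rcases eq_or_ne i j with rfl | hij
    · have hcancel : m i • f (m - single i 1 + single i 1) i = m i • f m i := by
        rcases Nat.eq_zero_or_pos (m i) with h0 | hpos
        · simp [h0]
        · rw [tsub_add_cancel_of_le (single_le_iff.mpr hpos)]
      rw [hcancel, add_tsub_cancel_right, if_pos rfl, Finsupp.add_apply, single_eq_same,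
        add_nsmul, one_nsmul, add_comm]
    · rw [Finsupp.add_apply, single_eq_of_ne hij, add_zero, if_neg hij,
        add_single_tsub_single_of_ne m hij, zero_add]
  simp only [summand, Finset.sum_add_distrib, Finset.sum_ite_eq', Finset.mem_univ, if_true]

section

variable {n : ℕ}

@[simp]
lemma mkOp_b (g : (Fin n →₀ ℕ) × Fin (2*n+1) → V n) (k : Fin n →₀ ℕ) (j : Fin (2*n+1)) :
    mkOp g (b k j) = g (k, j) := by
  simp [mkOp, b]

lemma idxLo_ne_idx0 (i : Fin n) : idxLo i ≠ (idx0 : Fin (2*n+1)) := by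
  simp [idxLo, idx0, Fin.ext_iff]

lemma idxHi_ne_idx0 (i : Fin n) : idxHi i ≠ (idx0 : Fin (2*n+1)) := by
  simp [idxHi, idx0, Fin.ext_iff]

lemma idxLo_ne_idxHi (i j : Fin n) : idxLo i ≠ idxHi j := by
  simp only [idxLo, idxHi, ne_eq, Fin.ext_iff]
  omega

lemma idxHi_inj {i j : Fin n} : (idxHi i : Fin (2*n+1)) = idxHi j ↔ i = j := by
  simp [idxHi, Fin.ext_iff]

lemma sgn_add_single (k : Fin n →₀ ℕ) (i : Fin n) : sgn (k + single i 1) = -sgn k := by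
  simp [sgn, deg, sum_add_index', pow_succ]

lemma sgn_mul_self (k : Fin n →₀ ℕ) : sgn k * sgn k = 1 := by
  simp [sgn, ← mul_pow]

lemma rt2_ne_zero : rt2 ≠ 0 := by
  simp [rt2]

lemma rt2_mul_self : rt2 * rt2 = 2 := by
  rw [rt2, ← Complex.ofReal_mul, Real.mul_self_sqrt zero_le_two, Complex.ofReal_ofNat]

/-- `∑ᵢ ∂ᵢ(xᵐ) ⊗ vᵢ`. -/
def derivPart (m : Fin n →₀ ℕ) : V n :=
  ∑ i, (m i : ℂ) • b (m - single i 1) (idxLo i)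

/-- `∑ᵢ xᵢ xᵐ ⊗ v_{n+i}`. -/
def multPart (m : Fin n →₀ ℕ) : V n :=
  ∑ i, b (m + single i 1) (idxHi i)

lemma Gamma2_b_idx0 (m : Fin n →₀ ℕ) :
    Gamma2 (b m idx0) = b m idx0 + (rt2 * sgn m) • (derivPart m + multPart m) := by
  simp [Gamma2, TpApp, TmApp, derivPart, multPart, Finset.smul_sum, smul_add, mul_smul,
    smul_comm (sgn m), add_assoc]

lemma Xplus_b_idx0 (j : Fin n) (m : Fin n →₀ ℕ) :
    Xplus j (b m idx0) = rt2⁻¹ • b (m + single j 1) idx0 + sgn m • b m (idxLo j) := by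
  simp [Xplus, TpApp]

lemma Xplus_derivPart (j : Fin n) (m : Fin n →₀ ℕ) :
    Xplus j (derivPart m)
      = rt2⁻¹ • ∑ i, (m i : ℂ) • b (m - single i 1 + single j 1) (idxLo i) := by
  simp [derivPart, Xplus, TpApp, idxLo_ne_idx0, idxLo_ne_idxHi, Finset.smul_sum,
    smul_comm rt2⁻¹]

lemma Xplus_multPart (j : Fin n) (m : Fin n →₀ ℕ) :
    Xplus j (multPart m)
      = rt2⁻¹ • multPart (m + single j 1) - sgn m • b (m + single j 1) idx0 := by
  simp [multPart, Xplus, TpApp, idxHi_ne_idx0, idxHi_inj, sgn_add_single, Finset.smul_sum,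
    Finset.sum_add_distrib, add_right_comm m, sub_eq_add_neg]

lemma derivPart_add_single (j : Fin n) (m : Fin n →₀ ℕ) :
    derivPart (m + single j 1) = b m (idxLo j)
      + ∑ i, (m i : ℂ) • b (m - single i 1 + single j 1) (idxLo i) := by
  rw [derivPart]
  simpa only [← Nat.cast_smul_eq_nsmul ℂ] using
    sum_add_single_smul_tsub_single (fun m' i => b m' (idxLo i)) m j

end

/-- Intertwining identity `X_{δⱼ} ∘ Γ₂ = Γ₂ ∘ (-(1/√2)·xⱼ)` on `x^k ⊗ v₀`. -/
theorem stmt12 (n : ℕ) (k : Fin n →₀ ℕ) (j : Fin n) :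
    Xplus j (Gamma2 (b k idx0)) =
      Gamma2 ((-rt2⁻¹) • b (k + Finsupp.single j 1) idx0) := by
  rw [map_smul, Gamma2_b_idx0, Gamma2_b_idx0, map_add, map_smul, map_add, Xplus_b_idx0,
    Xplus_derivPart, Xplus_multPart, derivPart_add_single, sgn_add_single]
  have hs := sgn_mul_self k
  have hr := rt2_mul_self
  have hr0 := rt2_ne_zero
  match_scalars <;> field_simp
  linear_combination (-sgn k ^ 2) * hr - 2 * hs
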